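/- Let G be the Kagome lattice graph: vertex set V = (2ℤw₁+2ℤw₂) ∪ (w₁+2ℤw₁+2ℤw₂) ∪ (w₂+2ℤw₁+2ℤw₂) ⊂ ℂ with w₁ = 1, w₂ = e^{iπ/3}, and edges between v₁, v₂ with |v₁ - v₂| = 1. For any hexagon H with vertices {w₀ + e^{kπi/3} : k = 0,…,5}, the function F_H(v) = (-1)^k if v = w₀ + e^{kπi/3} and 0 otherwise satisfies the eigenvalue equation Δ_comb F_H = (3/2) F_H, where (Δ_comb F)(v) = (1/deg v) Σ_{w∼v} (F(v) - F(w)). -/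

import Mathlib

/-! In the coordinates `a + b ω` with `ω = e^{iπ/3}`, the Kagome vertices are the points of the
triangular lattice with an even coordinate, neighbours differ by one of the six units `ω^k`, and
hexagon centres are the points with both coordinates odd. A vertex of `H` has exactly two
neighbours on `H`, both carrying the opposite sign; a vertex off `H` has either no neighbour on `H`
or two consecutive ones, whose signs cancel. After translating the centre to `(1, 1)` this is a
finite check on the vertices within distance `2` of the centre. -/

open Complex

/-- `w₁ = 1`. -/
noncomputable def kagomeW₁ : ℂ := 1

/-- `w₂ = e^{iπ/3}`. -/
noncomputable def kagomeW₂ : ℂ := Complex.exp (Real.pi * Complex.I / 3)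

/-- The vertex set of the Kagome lattice:
`V = (2ℤw₁+2ℤw₂) ∪ (w₁+2ℤw₁+2ℤw₂) ∪ (w₂+2ℤw₁+2ℤw₂) ⊂ ℂ`. -/
def kagomeV : Set ℂ :=
  {v | ∃ m n : ℤ,
      v = 2 * (m : ℂ) * kagomeW₁ + 2 * (n : ℂ) * kagomeW₂ ∨
      v = kagomeW₁ + 2 * (m : ℂ) * kagomeW₁ + 2 * (n : ℂ) * kagomeW₂ ∨
      v = kagomeW₂ + 2 * (m : ℂ) * kagomeW₁ + 2 * (n : ℂ) * kagomeW₂}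

/-- Adjacency in the Kagome lattice: two vertices at Euclidean distance `1`. -/
def kagomeAdj (v w : ℂ) : Prop :=
  v ∈ kagomeV ∧ w ∈ kagomeV ∧ ‖v - w‖ = 1

/-- The combinatorial (normalized) Laplacian of the Kagome lattice:
`(Δ F)(v) = (1/deg v) ∑_{w∼v} (F(v) - F(w))`, where every vertex has degree `4`.
(The sum over the finitely many neighbours is expressed as a `tsum`.) -/
noncomputable def kagomeLap (F : ℂ → ℝ) (v : ℂ) : ℝ :=
  (1 / 4) * ∑' w : {w : ℂ // kagomeAdj v w}, (F v - F (w : ℂ))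

/-- `w₀` is the centre of a hexagon of the Kagome lattice: its six prospective vertices
`w₀ + e^{kπi/3}`, `k = 0,…,5`, all belong to the lattice. -/
def IsHexCenter (w₀ : ℂ) : Prop :=
  ∀ k : Fin 6, w₀ + Complex.exp (((k : ℕ) : ℂ) * Real.pi * Complex.I / 3) ∈ kagomeV

/-- The alternating `±1` function supported on the vertices of the hexagon with centre `w₀`:
`F_H(v) = (-1)^k` if `v = w₀ + e^{kπi/3}` and `0` otherwise. -/
noncomputable def hexFun (w₀ : ℂ) : ℂ → ℝ := fun v =>
  if h : ∃ k : Fin 6, v = w₀ + Complex.exp (((k : ℕ) : ℂ) * Real.pi * Complex.I / 3) then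
    (-1 : ℝ) ^ ((h.choose : ℕ)) else 0

open Finset

noncomputable def latticePt (p : ℤ × ℤ) : ℂ := p.1 + p.2 * kagomeW₂

lemma kagomeW₂_eq : kagomeW₂ = ⟨1 / 2, √3 / 2⟩ := by
  have h : (Real.pi : ℂ) * I / 3 = (Real.pi / 3 : ℝ) * I := by push_cast; ring
  rw [kagomeW₂, h, exp_mul_I, ← ofReal_cos, ← ofReal_sin, Real.cos_pi_div_three,
    Real.sin_pi_div_three]
  apply Complex.ext <;> simp

lemma latticePt_re (p : ℤ × ℤ) : (latticePt p).re = p.1 + p.2 / 2 := by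
  simp [latticePt, kagomeW₂_eq, div_eq_mul_inv]

lemma latticePt_im (p : ℤ × ℤ) : (latticePt p).im = p.2 * (√3 / 2) := by
  simp [latticePt, kagomeW₂_eq]

lemma latticePt_add (p q : ℤ × ℤ) : latticePt (p + q) = latticePt p + latticePt q := by
  simp only [latticePt, Prod.fst_add, Prod.snd_add]; push_cast; ring

lemma latticePt_sub (p q : ℤ × ℤ) : latticePt (p - q) = latticePt p - latticePt q := by
  simp only [latticePt, Prod.fst_sub, Prod.snd_sub]; push_cast; ring

lemma latticePt_injective : Function.Injective latticePt := by
  rintro ⟨a, b⟩ ⟨c, d⟩ h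
  have him := congrArg Complex.im h
  have hre := congrArg Complex.re h
  simp only [latticePt_im, latticePt_re] at him hre
  have hbd : (b : ℝ) = d := mul_right_cancel₀ (by positivity) him
  have hac : (a : ℝ) = c := by linarith
  exact Prod.ext (by exact_mod_cast hac) (by exact_mod_cast hbd)

lemma normSq_latticePt (p : ℤ × ℤ) :
    normSq (latticePt p) = ((p.1 ^ 2 + p.1 * p.2 + p.2 ^ 2 : ℤ) : ℝ) := by
  have h3 : √3 ^ 2 = 3 := Real.sq_sqrt (by norm_num)
  rw [normSq_apply, latticePt_re, latticePt_im]
  push_cast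
  linear_combination (p.2 : ℝ) ^ 2 / 4 * h3

def hexDir : Fin 6 → ℤ × ℤ := ![(1, 0), (0, 1), (-1, 1), (-1, 0), (0, -1), (1, -1)]

lemma hexDir_injective : Function.Injective hexDir := by decide

lemma exp_eq_latticePt_hexDir (k : Fin 6) :
    exp (((k : ℕ) : ℂ) * Real.pi * I / 3) = latticePt (hexDir k) := by
  have hsq : kagomeW₂ ^ 2 = kagomeW₂ - 1 := by
    have h3 : √3 * √3 = 3 := Real.mul_self_sqrt (by norm_num)
    apply Complex.ext <;> simp [kagomeW₂_eq, pow_two] <;> linarith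
  rw [show ((k : ℕ) : ℂ) * Real.pi * I / 3 = (k : ℕ) * (Real.pi * I / 3) by ring,
    exp_nat_mul, ← kagomeW₂]
  fin_cases k <;> simp only [latticePt, hexDir] <;> push_cast
  · ring
  · ring
  · linear_combination hsq
  · linear_combination (kagomeW₂ + 1) * hsq
  · linear_combination (kagomeW₂ ^ 2 + kagomeW₂) * hsq
  · linear_combination (kagomeW₂ ^ 3 + kagomeW₂ ^ 2 - 1) * hsq

lemma sq_add_mul_add_sq_eq_one_iff (a b : ℤ) :
    a ^ 2 + a * b + b ^ 2 = 1 ↔ ∃ k, hexDir k = (a, b) := by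
  constructor
  · intro h
    have ha : -1 ≤ a ∧ a ≤ 1 := by constructor <;> nlinarith [sq_nonneg (a + 2 * b)]
    have hb : -1 ≤ b ∧ b ≤ 1 := by constructor <;> nlinarith [sq_nonneg (2 * a + b)]
    obtain ⟨ha₁, ha₂⟩ := ha
    obtain ⟨hb₁, hb₂⟩ := hb
    interval_cases a <;> interval_cases b <;> first | decide | omega
  · rintro ⟨k, hk⟩
    have hk' := congrArg (fun p : ℤ × ℤ => p.1 ^ 2 + p.1 * p.2 + p.2 ^ 2) hk
    fin_cases k <;> simpa [hexDir] using hk'.symm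

lemma norm_latticePt_eq_one_iff (p : ℤ × ℤ) :
    ‖latticePt p‖ = 1 ↔ ∃ k, hexDir k = p := by
  rw [← sq_add_mul_add_sq_eq_one_iff, ← pow_eq_one_iff_of_nonneg (norm_nonneg _) two_ne_zero,
    Complex.sq_norm, normSq_latticePt]
  exact_mod_cast Iff.rfl

def IsKagomePt (p : ℤ × ℤ) : Prop := p.1 % 2 = 0 ∨ p.2 % 2 = 0

instance : DecidablePred IsKagomePt := fun _ => inferInstanceAs (Decidable (_ ∨ _))

lemma kagomeV_eq_image : kagomeV = latticePt '' {p | IsKagomePt p} := by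
  ext v
  constructor
  · rintro ⟨m, n, rfl | rfl | rfl⟩
    · exact ⟨(2 * m, 2 * n), Or.inl (by omega), by push_cast [latticePt, kagomeW₁]; ring⟩
    · exact ⟨(2 * m + 1, 2 * n), Or.inr (by omega), by push_cast [latticePt, kagomeW₁]; ring⟩
    · exact ⟨(2 * m, 2 * n + 1), Or.inl (by omega), by push_cast [latticePt, kagomeW₁]; ring⟩
  · rintro ⟨⟨a, b⟩, hab, rfl⟩
    obtain ⟨m, rfl⟩ | ⟨m, rfl⟩ := Int.even_or_odd a <;>
      obtain ⟨n, rfl⟩ | ⟨n, rfl⟩ := Int.even_or_odd b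
    · exact ⟨m, n, Or.inl (by push_cast [latticePt, kagomeW₁]; ring)⟩
    · exact ⟨m, n, Or.inr (Or.inr (by push_cast [latticePt, kagomeW₁]; ring))⟩
    · exact ⟨m, n, Or.inr (Or.inl (by push_cast [latticePt, kagomeW₁]; ring))⟩
    · exact absurd hab (by simp only [Set.mem_ofPred_eq, IsKagomePt]; omega)

lemma latticePt_mem_kagomeV_iff (p : ℤ × ℤ) : latticePt p ∈ kagomeV ↔ IsKagomePt p := by
  rw [kagomeV_eq_image, latticePt_injective.mem_set_image]; rfl

noncomputable def kagomeNbrs (p : ℤ × ℤ) : Finset ℂ :=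
  ({k | IsKagomePt (p + hexDir k)} : Finset (Fin 6)).image fun k => latticePt (p + hexDir k)

lemma kagomeAdj_latticePt_iff {p : ℤ × ℤ} (hp : IsKagomePt p) (w : ℂ) :
    kagomeAdj (latticePt p) w ↔ w ∈ kagomeNbrs p := by
  simp only [kagomeNbrs, mem_image, mem_filter, mem_univ, true_and]
  constructor
  · rintro ⟨-, hw, hpw⟩
    rw [kagomeV_eq_image] at hw
    obtain ⟨q, hq, rfl⟩ := hw
    rw [norm_sub_rev, ← latticePt_sub, norm_latticePt_eq_one_iff] at hpw
    obtain ⟨k, hk⟩ := hpw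
    rw [← add_sub_cancel p q, ← hk] at hq ⊢
    exact ⟨k, hq, rfl⟩
  · rintro ⟨k, hk, rfl⟩
    refine ⟨(latticePt_mem_kagomeV_iff p).2 hp, (latticePt_mem_kagomeV_iff _).2 hk, ?_⟩
    rw [norm_sub_rev, ← latticePt_sub, add_sub_cancel_left, norm_latticePt_eq_one_iff]
    exact ⟨k, rfl⟩

lemma kagomeLap_latticePt (F : ℂ → ℝ) {p : ℤ × ℤ} (hp : IsKagomePt p) :
    kagomeLap F (latticePt p) = 1 / 4 *
      ∑ k with IsKagomePt (p + hexDir k), (F (latticePt p) - F (latticePt (p + hexDir k))) := by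
  have hinj : Function.Injective fun k => latticePt (p + hexDir k) :=
    latticePt_injective.comp ((add_right_injective p).comp hexDir_injective)
  rw [kagomeLap]
  congr 1
  calc _ = ∑' w : {w // w ∈ kagomeNbrs p}, (F (latticePt p) - F w) :=
        (Equiv.subtypeEquivRight (kagomeAdj_latticePt_iff hp)).tsum_eq
          fun w => F (latticePt p) - F w
    _ = _ := (Finset.tsum_subtype _ fun w => F (latticePt p) - F w).trans (sum_image hinj.injOn)

lemma IsHexCenter.exists_odd_latticePt {w₀ : ℂ} (hw₀ : IsHexCenter w₀) :
    ∃ c : ℤ × ℤ, w₀ = latticePt c ∧ c.1 % 2 = 1 ∧ c.2 % 2 = 1 := by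
  have hq := hw₀ 0
  rw [exp_eq_latticePt_hexDir, kagomeV_eq_image] at hq
  obtain ⟨q, -, hq⟩ := hq
  have hw₀c : w₀ = latticePt (q - (1, 0)) := by
    rw [latticePt_sub, hq]
    exact (add_sub_cancel_right w₀ (latticePt (hexDir 0))).symm
  have hc : ∀ k, IsKagomePt (q - (1, 0) + hexDir k) := fun k => by
    rw [← latticePt_mem_kagomeV_iff, latticePt_add, ← hw₀c, ← exp_eq_latticePt_hexDir]
    exact hw₀ k
  have h₀ : IsKagomePt (q - (1, 0) + (1, 0)) := hc 0
  have h₁ : IsKagomePt (q - (1, 0) + (0, 1)) := hc 1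
  have h₂ : IsKagomePt (q - (1, 0) + (-1, 1)) := hc 2
  simp only [IsKagomePt, Prod.fst_add, Prod.snd_add] at h₀ h₁ h₂
  exact ⟨_, hw₀c, by omega, by omega⟩

def hexSign (q : ℤ × ℤ) : ℤ := ∑ k : Fin 6, if hexDir k = q then (-1) ^ (k : ℕ) else 0

lemma hexSign_hexDir : ∀ k, hexSign (hexDir k) = (-1) ^ (k : ℕ) := by decide

lemma hexSign_eq_zero {q : ℤ × ℤ} (hq : ∀ k, hexDir k ≠ q) : hexSign q = 0 :=
  sum_eq_zero fun k _ => if_neg (hq k)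

lemma hexFun_latticePt (c p : ℤ × ℤ) :
    hexFun (latticePt c) (latticePt p) = hexSign (p - c) := by
  have hvert (k : Fin 6) :
      latticePt p = latticePt c + exp (((k : ℕ) : ℂ) * Real.pi * I / 3) ↔ hexDir k = p - c := by
    rw [exp_eq_latticePt_hexDir, ← latticePt_add, latticePt_injective.eq_iff, eq_sub_iff_add_eq',
      eq_comm]
  unfold hexFun
  split_ifs with h
  · rw [← (hvert _).1 h.choose_spec, hexSign_hexDir]
    push_cast
    rfl
  · simp only [hvert, not_exists] at h
    rw [hexSign_eq_zero h, Int.cast_zero]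

lemma hexSign_eq_zero_of_one_lt_abs {q : ℤ × ℤ} (hq : 1 < |q.1| ∨ 1 < |q.2|) :
    hexSign q = 0 := by
  refine hexSign_eq_zero fun k hk => ?_
  subst hk
  fin_cases k <;> simp [hexDir] at hq

lemma abs_hexDir_le : ∀ k, |(hexDir k).1| ≤ 1 ∧ |(hexDir k).2| ≤ 1 := by decide

lemma sum_hexSign_sub_of_isKagomePt_add_one_one {q : ℤ × ℤ} (hq : IsKagomePt (q + (1, 1))) :
    ∑ k with IsKagomePt (q + (1, 1) + hexDir k), (hexSign q - hexSign (q + hexDir k)) =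
      6 * hexSign q := by
  by_cases hbox : |q.1| ≤ 2 ∧ |q.2| ≤ 2
  · have hcheck : ∀ a ∈ Icc (-2 : ℤ) 2, ∀ b ∈ Icc (-2 : ℤ) 2,
        IsKagomePt ((a, b) + (1, 1)) → ∑ k with IsKagomePt ((a, b) + (1, 1) + hexDir k),
          (hexSign (a, b) - hexSign ((a, b) + hexDir k)) = 6 * hexSign (a, b) := by
      decide
    exact hcheck q.1 (mem_Icc.2 (abs_le.1 hbox.1)) q.2 (mem_Icc.2 (abs_le.1 hbox.2)) hq
  · have hout : ∀ k, hexSign (q + hexDir k) = 0 := fun k => by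
      have hk := abs_hexDir_le k
      rw [abs_le, abs_le] at hk
      rw [not_and_or, not_le, not_le, lt_abs, lt_abs] at hbox
      refine hexSign_eq_zero_of_one_lt_abs ?_
      rw [lt_abs, lt_abs, Prod.fst_add, Prod.snd_add]
      omega
    have hq0 : hexSign q = 0 := by
      refine hexSign_eq_zero_of_one_lt_abs ?_
      rw [not_and_or, not_le, not_le] at hbox
      omega
    simp [hout, hq0]

lemma sum_hexSign_sub {c : ℤ × ℤ} (hc₁ : c.1 % 2 = 1) (hc₂ : c.2 % 2 = 1) {p : ℤ × ℤ}
    (hp : IsKagomePt p) :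
    ∑ k with IsKagomePt (p + hexDir k), (hexSign (p - c) - hexSign (p + hexDir k - c)) =
      6 * hexSign (p - c) := by
  have hp' : IsKagomePt (p - c + (1, 1)) := by
    simp only [IsKagomePt, Prod.fst_add, Prod.snd_add, Prod.fst_sub, Prod.snd_sub] at hp ⊢
    omega
  rw [← sum_hexSign_sub_of_isKagomePt_add_one_one hp']
  refine sum_congr (filter_congr fun k _ => ?_) fun k _ => by rw [sub_add_eq_add_sub]
  simp only [IsKagomePt, Prod.fst_add, Prod.snd_add, Prod.fst_sub, Prod.snd_sub]
  omega

/-- For any hexagon `H` of the Kagome lattice with vertices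
`{w₀ + e^{kπi/3} : k = 0,…,5}`, the alternating function `F_H` satisfies
`Δ_comb F_H = (3/2) F_H` (at every vertex of the lattice). -/
theorem hexFun_is_eigenfunction (w₀ : ℂ) (hw₀ : IsHexCenter w₀) :
    ∀ v ∈ kagomeV, kagomeLap (hexFun w₀) v = (3 / 2) * hexFun w₀ v := by
  intro v hv
  obtain ⟨c, rfl, hc₁, hc₂⟩ := hw₀.exists_odd_latticePt
  rw [kagomeV_eq_image] at hv
  obtain ⟨p, hp, rfl⟩ := hv
  have hsum := congrArg (Int.cast : ℤ → ℝ) (sum_hexSign_sub hc₁ hc₂ hp)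
  push_cast at hsum
  simp only [kagomeLap_latticePt _ hp, hexFun_latticePt, hsum]
  ring
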